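/- Suppose f : ℝ → ℝ is continuous, and there exist constants c > 0, C > 0, and T₀ such that for all T ≥ T₀ we have ∫_T^{2T} |f(t)| dt ≥ c·T and |∫_T^{2T} f(t) dt| ≤ C·T^{3/4}. Then there exist arbitrarily large t with f(t) > 0 and arbitrarily large t with f(t) < 0; in particular, f has arbitrarily large real zeros. -/
import Mathlib


open MeasureTheory

theorem sign_changes_of_moment_bounds (f : ℝ → ℝ) (hf : Continuous f)
    (c C T₀ : ℝ) (hc : 0 < c) (hC : 0 < C)
    (hlow : ∀ T, T₀ ≤ T → c * T ≤ ∫ t in T..(2 * T), |f t|)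
    (hupp : ∀ T, T₀ ≤ T → |∫ t in T..(2 * T), f t| ≤ C * T ^ ((3 : ℝ) / 4)) :
    (∀ M : ℝ, ∃ t, M < t ∧ 0 < f t) ∧
    (∀ M : ℝ, ∃ t, M < t ∧ f t < 0) ∧
    (∀ M : ℝ, ∃ t, M < t ∧ f t = 0) := by
  have key : ∀ M : ℝ, ∃ T : ℝ, M < T ∧ T₀ ≤ T ∧ 0 < T ∧
      C * T ^ ((3:ℝ)/4) < c * T := by
    intro M
    set T := max (max T₀ (M + 1)) (max 1 ((C / c) ^ (4:ℕ) + 1)) with hT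
    have hT1 : (1:ℝ) ≤ T := le_trans (le_max_left _ _) (le_max_right _ _)
    have hTpos : (0:ℝ) < T := lt_of_lt_of_le one_pos hT1
    refine ⟨T, ?_, le_trans (le_max_left _ _) (le_max_left _ _), hTpos, ?_⟩
    · calc M < M + 1 := by linarith
        _ ≤ T := le_trans (le_max_right _ _) (le_max_left _ _)
    · have h4 : (C / c) ^ (4:ℕ) < T :=
        lt_of_lt_of_le (by linarith) (le_trans (le_max_right _ _) (le_max_right _ _))
      have hcc : 0 < C / c := div_pos hC hc
      have hroot : C / c < T ^ ((1:ℝ)/4) := by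
        have h := Real.rpow_lt_rpow (le_of_lt (pow_pos hcc 4)) h4
          (by norm_num : (0:ℝ) < 1/4)
        calc C / c = ((C/c) ^ (4:ℕ)) ^ ((1:ℝ)/4) := by
              rw [← Real.rpow_natCast (C/c) 4, ← Real.rpow_mul hcc.le]
              norm_num
          _ < T ^ ((1:ℝ)/4) := h
      have hmul : (C / c) * T ^ ((3:ℝ)/4) < T ^ ((1:ℝ)/4) * T ^ ((3:ℝ)/4) :=
        mul_lt_mul_of_pos_right hroot (Real.rpow_pos_of_pos hTpos _)
      have hsum : T ^ ((1:ℝ)/4) * T ^ ((3:ℝ)/4) = T := by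
        rw [← Real.rpow_add hTpos]
        norm_num
      rw [hsum] at hmul
      calc C * T ^ ((3:ℝ)/4) = c * (C / c * T ^ ((3:ℝ)/4)) := by
            field_simp
        _ < c * T := mul_lt_mul_of_pos_left hmul hc
  have hpos : ∀ M : ℝ, ∃ t, M < t ∧ 0 < f t := by
    intro M
    by_contra h
    push_neg at h
    obtain ⟨T, hMT, hT₀, hTpos, hkey⟩ := key M
    have hsign : ∀ t ∈ Set.uIcc T (2*T), |f t| = -f t := by
      intro t ht
      rw [Set.uIcc_of_le (by linarith)] at ht
      exact abs_of_nonpos (h t (lt_of_lt_of_le hMT ht.1))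
    have heq : (∫ t in T..(2*T), |f t|) = -∫ t in T..(2*T), f t := by
      rw [← intervalIntegral.integral_neg]
      exact intervalIntegral.integral_congr hsign
    have h1 := hlow T hT₀
    have h2 := hupp T hT₀
    rw [heq] at h1
    have h3 : c * T ≤ |∫ t in T..(2*T), f t| := le_trans h1 (neg_le_abs _)
    linarith
  have hneg : ∀ M : ℝ, ∃ t, M < t ∧ f t < 0 := by
    intro M
    by_contra h
    push_neg at h
    obtain ⟨T, hMT, hT₀, hTpos, hkey⟩ := key M
    have hsign : ∀ t ∈ Set.uIcc T (2*T), |f t| = f t := by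
      intro t ht
      rw [Set.uIcc_of_le (by linarith)] at ht
      exact abs_of_nonneg (h t (lt_of_lt_of_le hMT ht.1))
    have heq : (∫ t in T..(2*T), |f t|) = ∫ t in T..(2*T), f t :=
      intervalIntegral.integral_congr hsign
    have h1 := hlow T hT₀
    have h2 := hupp T hT₀
    rw [heq] at h1
    have h3 : c * T ≤ |∫ t in T..(2*T), f t| := le_trans h1 (le_abs_self _)
    linarith
  refine ⟨hpos, hneg, ?_⟩
  intro M
  obtain ⟨a, hMa, hfa⟩ := hpos M
  obtain ⟨b, hab, hfb⟩ := hneg a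
  have hmem : (0:ℝ) ∈ Set.Icc (f b) (f a) := ⟨hfb.le, hfa.le⟩
  have himg := intermediate_value_Icc' hab.le hf.continuousOn hmem
  obtain ⟨t, ht, hft⟩ := himg
  exact ⟨t, lt_of_lt_of_le hMa ht.1, hft⟩
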